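/- arXiv:1106.6206 — 2 statements merged into one kernel-verified Lean document; each statement's English description precedes it below -/
import Mathlib

section
/- Let q ≥ 2, m ≥ 1, n ≥ 1 be integers, let C ⊆ Q^m be a nonempty code with distance enumerator polynomial B(x), let 0 < δ ≤ 1 and set d = ⌈δmn⌉. Then for every real x with 0 < x ≤ 1 there exists a subcode D ⊆ C^n ⊆ Q^{mn} whose distinct codewords have pairwise Hamming distance at least d and whose cardinality satisfies |D| ≥ |C|^n · x^{d−1} / B(x)^n. -/
open Finset

/-- The distance enumerator polynomial `B(x) = Σ_j B_j x^j` of a code `C ⊆ Q^m`,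
where `B_j = (1/|C|)·|{(u,v) ∈ C×C : d(u,v) = j}|`, evaluated at `x`. -/
noncomputable def distEnum (q m : ℕ) (C : Finset (Fin m → Fin q)) (x : ℝ) : ℝ :=
  (C.card : ℝ)⁻¹ * ∑ p ∈ C ×ˢ C, x ^ hammingDist p.1 p.2

/-- `codePow q m n C = C^n` : words of length `mn` over `Q` (indexed by `Fin n × Fin m`)
that are concatenations of `n` codewords of `C`. -/
def codePow (q m n : ℕ) (C : Finset (Fin m → Fin q)) : Finset (Fin n × Fin m → Fin q) :=
  Finset.univ.filter fun w => ∀ i : Fin n, (fun j => w (i, j)) ∈ C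

/-!
Call two words of `S = C^n` close if their distance is at most `d - 1`. By Caro–Wei and
Cauchy–Schwarz, `S` contains a set `D` of pairwise far words with
`|S|² ≤ |D| · Σ_{v ∈ S} #{w ∈ S close to v}`. For `0 ≤ x ≤ 1` each close `w` contributes at
least `x^(d-1)` to `Σ_{w ∈ S} x^d(v,w)`, and since the distance is additive over the `n` blocks,
`Σ_{v,w ∈ S} x^d(v,w) = (Σ_{c,c' ∈ C} x^d(c,c'))^n = (|C| B(x))^n`.
-/

/-- Caro–Wei: keep a vertex of minimal closed degree and discard its closed neighbourhood `N`;
the discarded vertices contribute at most `#N / #N = 1` to the sum. -/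
theorem exists_pairwise_not_rel_sum_inv_card_le {α : Type*} [DecidableEq α]
    (r : α → α → Prop) [DecidableRel r] (hr : ∀ a, r a a) (hs : ∀ a b, r a b → r b a)
    (S : Finset α) :
    ∃ D ⊆ S, (D : Set α).Pairwise (fun u v => ¬ r u v) ∧
      ∑ v ∈ S, (#{w ∈ S | r v w} : ℝ)⁻¹ ≤ #D := by
  induction S using Finset.strongInduction with
  | H S ih =>
  rcases S.eq_empty_or_nonempty with rfl | hS
  · exact ⟨∅, empty_subset _, by simp, by simp⟩
  obtain ⟨u, hu, hmin⟩ := S.exists_min_image (fun v => #{w ∈ S | r v w}) hS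
  set N := {w ∈ S | r u w}
  have huN : u ∈ N := mem_filter.2 ⟨hu, hr u⟩
  obtain ⟨D, hDS, hD, hcard⟩ := ih (S \ N) (sdiff_ssubset (filter_subset _ _) ⟨u, huN⟩)
  have hfar : ∀ v ∈ D, ¬ r u v := fun v hv h =>
    (mem_sdiff.1 (hDS hv)).2 (mem_filter.2 ⟨(mem_sdiff.1 (hDS hv)).1, h⟩)
  refine ⟨insert u D, insert_subset hu (hDS.trans sdiff_subset), ?_, ?_⟩
  · rw [coe_insert]
    exact hD.insert fun v hv _ => ⟨hfar v hv, fun h => hfar v hv (hs _ _ h)⟩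
  have hnear : ∑ v ∈ N, (#{w ∈ S | r v w} : ℝ)⁻¹ ≤ 1 := by
    have hNpos : (0 : ℝ) < #N := by exact_mod_cast card_pos.2 ⟨u, huN⟩
    calc ∑ v ∈ N, (#{w ∈ S | r v w} : ℝ)⁻¹ ≤ ∑ v ∈ N, (#N : ℝ)⁻¹ :=
          sum_le_sum fun v hv => inv_anti₀ hNpos (by exact_mod_cast hmin v (filter_subset _ _ hv))
      _ = 1 := by rw [sum_const, nsmul_eq_mul, mul_inv_cancel₀ hNpos.ne']
  have hrest : ∑ v ∈ S \ N, (#{w ∈ S | r v w} : ℝ)⁻¹ ≤ #D := by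
    refine (sum_le_sum fun v hv => inv_anti₀ ?_ ?_).trans hcard
    · exact_mod_cast card_pos.2 ⟨v, mem_filter.2 ⟨hv, hr v⟩⟩
    · exact_mod_cast card_le_card (filter_subset_filter _ sdiff_subset)
  rw [← sum_sdiff (filter_subset (fun w => r u w) S),
    card_insert_of_notMem fun h => (mem_sdiff.1 (hDS h)).2 huN]
  push_cast
  linarith

theorem exists_pairwise_not_rel_sq_card_le {α : Type*} [DecidableEq α]
    (r : α → α → Prop) [DecidableRel r] (hr : ∀ a, r a a) (hs : ∀ a b, r a b → r b a)
    (S : Finset α) :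
    ∃ D ⊆ S, (D : Set α).Pairwise (fun u v => ¬ r u v) ∧
      (#S : ℝ) ^ 2 ≤ #D * ∑ v ∈ S, (#{w ∈ S | r v w} : ℝ) := by
  obtain ⟨D, hDS, hD, hcard⟩ := exists_pairwise_not_rel_sum_inv_card_le r hr hs S
  refine ⟨D, hDS, hD, ?_⟩
  have hpos : ∀ v ∈ S, (0 : ℝ) < #{w ∈ S | r v w} := fun v hv => by
    exact_mod_cast card_pos.2 ⟨v, mem_filter.2 ⟨hv, hr v⟩⟩
  calc (#S : ℝ) ^ 2 = (∑ _v ∈ S, (1 : ℝ)) ^ 2 := by simp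
    _ ≤ (∑ v ∈ S, (#{w ∈ S | r v w} : ℝ)⁻¹) * ∑ v ∈ S, (#{w ∈ S | r v w} : ℝ) :=
      sum_sq_le_sum_mul_sum_of_sq_le_mul S (fun v hv => (inv_pos.2 (hpos v hv)).le)
        (fun v hv => (hpos v hv).le) fun v hv => by rw [inv_mul_cancel₀ (hpos v hv).ne', one_pow]
    _ ≤ #D * ∑ v ∈ S, (#{w ∈ S | r v w} : ℝ) := by gcongr

theorem card_filter_le_mul_pow_le_sum_pow {α : Type*} (S : Finset α) (f : α → ℕ) (k : ℕ)
    {x : ℝ} (hx0 : 0 ≤ x) (hx1 : x ≤ 1) :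
    (#{w ∈ S | f w ≤ k} : ℝ) * x ^ k ≤ ∑ w ∈ S, x ^ f w :=
  calc (#{w ∈ S | f w ≤ k} : ℝ) * x ^ k = ∑ _w ∈ {w ∈ S | f w ≤ k}, x ^ k := by
        rw [sum_const, nsmul_eq_mul]
    _ ≤ ∑ w ∈ {w ∈ S | f w ≤ k}, x ^ f w :=
        sum_le_sum fun w hw => pow_le_pow_of_le_one hx0 hx1 (mem_filter.1 hw).2
    _ ≤ ∑ w ∈ S, x ^ f w :=
        sum_le_sum_of_subset_of_nonneg (filter_subset _ _) fun _ _ _ => pow_nonneg hx0 _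

theorem hammingDist_eq_sum_hammingDist_row {ι κ β : Type*} [Fintype ι] [Fintype κ]
    [DecidableEq β] (u v : ι × κ → β) :
    hammingDist u v = ∑ i, hammingDist (fun j => u (i, j)) (fun j => v (i, j)) := by
  simp only [hammingDist, card_filter]
  rw [Fintype.sum_prod_type]

theorem codePow_eq_map_piFinset (q m n : ℕ) (C : Finset (Fin m → Fin q)) :
    codePow q m n C =
      (Fintype.piFinset fun _ : Fin n => C).map (Equiv.curry _ _ _).symm.toEmbedding := by
  ext w
  simp [codePow, mem_map_equiv]
  rfl

theorem card_codePow (q m n : ℕ) (C : Finset (Fin m → Fin q)) :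
    #(codePow q m n C) = #C ^ n := by
  simp [codePow_eq_map_piFinset]

theorem sum_pow_hammingDist_codePow {R : Type*} [CommSemiring R] (q m n : ℕ)
    (C : Finset (Fin m → Fin q)) (x : R) :
    ∑ u ∈ codePow q m n C, ∑ v ∈ codePow q m n C, x ^ hammingDist u v =
      (∑ c ∈ C, ∑ c' ∈ C, x ^ hammingDist c c') ^ n := by
  rw [← Fin.prod_const, prod_univ_sum, codePow_eq_map_piFinset, sum_map]
  refine sum_congr rfl fun f _ => ?_
  rw [prod_univ_sum, sum_map]
  refine sum_congr rfl fun g _ => ?_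
  rw [hammingDist_eq_sum_hammingDist_row, ← prod_pow_eq_pow_sum]
  rfl

theorem card_mul_distEnum (q m : ℕ) (C : Finset (Fin m → Fin q)) (x : ℝ) :
    #C * distEnum q m C x = ∑ c ∈ C, ∑ c' ∈ C, x ^ hammingDist c c' := by
  rcases C.eq_empty_or_nonempty with rfl | hC
  · simp
  rw [distEnum, sum_product, ← mul_assoc, mul_inv_cancel₀ (by simp [hC.ne_empty]), one_mul]

theorem exists_subcode_of_codePow_general (q m n : ℕ)
    (C : Finset (Fin m → Fin q))
    (δ : ℝ)
    (x : ℝ) (hx0 : 0 < x) (hx1 : x ≤ 1) :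
    ∃ D : Finset (Fin n × Fin m → Fin q), D ⊆ codePow q m n C ∧
      (∀ u ∈ D, ∀ v ∈ D, u ≠ v → ⌈δ * ((m * n : ℕ) : ℝ)⌉₊ ≤ hammingDist u v) ∧
      (C.card : ℝ) ^ n * x ^ (⌈δ * ((m * n : ℕ) : ℝ)⌉₊ - 1) / (distEnum q m C x) ^ n
        ≤ (D.card : ℝ) := by
  generalize ⌈δ * ((m * n : ℕ) : ℝ)⌉₊ = d
  set S := codePow q m n C
  -- `≤ d - 1` rather than `< d`, so that closeness stays reflexive when `d = 0`
  obtain ⟨D, hDS, hD, hcard⟩ := exists_pairwise_not_rel_sq_card_le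
    (fun u v => hammingDist u v ≤ d - 1) (fun u => by simp)
    (fun u v h => by rwa [hammingDist_comm] at h) S
  refine ⟨D, hDS, fun u hu v hv huv => by have := hD hu hv huv; omega, ?_⟩
  have hball : (∑ v ∈ S, (#{w ∈ S | hammingDist v w ≤ d - 1} : ℝ)) * x ^ (d - 1) ≤
      (#C * distEnum q m C x) ^ n := by
    rw [sum_mul, card_mul_distEnum, ← sum_pow_hammingDist_codePow]
    exact sum_le_sum fun v _ => card_filter_le_mul_pow_le_sum_pow S _ _ hx0.le hx1
  have hS : (#S : ℝ) = #C ^ n := by simp [S, card_codePow]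
  have hB : 0 ≤ distEnum q m C x := by unfold distEnum; positivity
  rcases (pow_nonneg (Nat.cast_nonneg #C : (0 : ℝ) ≤ #C) n).eq_or_lt with hC | hC
  · simp [← hC]
  refine div_le_of_le_mul₀ (pow_nonneg hB n) (Nat.cast_nonneg _) (le_of_mul_le_mul_left ?_ hC)
  calc (#C : ℝ) ^ n * (#C ^ n * x ^ (d - 1)) = #S ^ 2 * x ^ (d - 1) := by rw [hS]; ring
    _ ≤ #D * (∑ v ∈ S, (#{w ∈ S | hammingDist v w ≤ d - 1} : ℝ)) * x ^ (d - 1) := by gcongr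
    _ ≤ #D * (#C * distEnum q m C x) ^ n := by rw [mul_assoc]; gcongr
    _ = #C ^ n * (#D * distEnum q m C x ^ n) := by ring

theorem exists_subcode_of_codePow (q m n : ℕ) (hq : 2 ≤ q) (hm : 1 ≤ m) (hn : 1 ≤ n)
    (C : Finset (Fin m → Fin q)) (hC : C.Nonempty)
    (δ : ℝ) (hδ0 : 0 < δ) (hδ1 : δ ≤ 1)
    (x : ℝ) (hx0 : 0 < x) (hx1 : x ≤ 1) :
    ∃ D : Finset (Fin n × Fin m → Fin q), D ⊆ codePow q m n C ∧
      (∀ u ∈ D, ∀ v ∈ D, u ≠ v → ⌈δ * ((m * n : ℕ) : ℝ)⌉₊ ≤ hammingDist u v) ∧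
      (C.card : ℝ) ^ n * x ^ (⌈δ * ((m * n : ℕ) : ℝ)⌉₊ - 1) / (distEnum q m C x) ^ n
        ≤ (D.card : ℝ) :=
  exists_subcode_of_codePow_general q m n C δ x hx0 hx1
end

section
/- Let q ≥ 2 and m ≥ 1 be integers and let C ⊆ Q^m be a nonempty code. Then for every δ with 0 ≤ δ ≤ 1 and every real x with 0 < x < 1, one has α_q(δ) ≥ (1/m)·log_q( Σ_{c∈C} 1/B_c(x) ) + δ·log_q x. -/
open Finset

/-- `minDistGE q n d C` : any two distinct codewords of `C ⊆ Q^n` have Hamming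
distance at least `d`. -/
def minDistGE (q n d : ℕ) (C : Finset (Fin n → Fin q)) : Prop :=
  ∀ u ∈ C, ∀ v ∈ C, u ≠ v → d ≤ hammingDist u v

/-- `Aq q n d` : maximum cardinality of a `q`-ary code of length `n` with minimum
Hamming distance at least `d`. -/
noncomputable def Aq (q n d : ℕ) : ℕ :=
  sSup {k : ℕ | ∃ C : Finset (Fin n → Fin q), minDistGE q n d C ∧ C.card = k}

/-- `alphaQ q δ = limsup_{n→∞} (1/n)·log_q A_q(n, ⌈δn⌉)`. -/
noncomputable def alphaQ (q : ℕ) (δ : ℝ) : ℝ :=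
  Filter.limsup (fun n : ℕ => Real.logb q (Aq q n ⌈δ * (n : ℝ)⌉₊) / n) Filter.atTop

/-- The local distance enumerator `B_c(x) = Σ_j |{y ∈ C : d(c,y) = j}| x^j` of `c` in `C`. -/
noncomputable def localDistEnum (q m : ℕ) (C : Finset (Fin m → Fin q))
    (c : Fin m → Fin q) (x : ℝ) : ℝ :=
  ∑ y ∈ C, x ^ hammingDist c y

/-!
Blow `C` up to its `k`-fold product code `Cᵏ ⊆ Q^{km}`, whose local distance enumerators are
products of those of `C`, so that `∑_{u ∈ Cᵏ} 1 / B_u(x) = (∑_{c ∈ C} 1 / B_c(x))ᵏ`. Join two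
words of `Cᵏ` when their distance is below `d`. Since `0 < x ≤ 1`, a word `u` has at most
`x^{-(d-1)} B_u(x)` neighbours (itself included), so the Caro–Wei bound produces an independent
set, i.e. a code of minimum distance `d`, of size at least `x^{d-1} (∑_{c ∈ C} 1 / B_c(x))ᵏ`.
Taking `log_q`, dividing by `n = km` and `d = ⌈δn⌉` gives the bound along the lengths `km`,
hence for the limsup.
-/

namespace SimpleGraph

variable {α : Type*} [DecidableEq α] (G : SimpleGraph α) [DecidableRel G.Adj]

theorem exists_isIndepSet_sum_inv_degree_le_card (V : Finset α) :
    ∃ I ⊆ V, G.IsIndepSet (I : Set α) ∧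
      ∑ u ∈ V, (1 : ℝ) / (#{v ∈ V | G.Adj u v} + 1) ≤ #I := by
  induction V using Finset.strongInduction with
  | H V ih =>
  rcases V.eq_empty_or_nonempty with rfl | hV
  · exact ⟨∅, by simp⟩
  -- greedily keep a vertex `v` of minimal degree and discard its closed neighbourhood
  obtain ⟨v, hv, hmin⟩ := V.exists_min_image (fun u => #{w ∈ V | G.Adj u w}) hV
  set N := insert v {w ∈ V | G.Adj v w}
  have hNV : N ⊆ V := insert_subset hv (filter_subset _ _)
  obtain ⟨I, hIV, hI, hsum⟩ := ih (V \ N) (sdiff_ssubset hNV (insert_nonempty _ _))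
  have hvI : v ∉ I := fun h => (mem_sdiff.1 (hIV h)).2 (mem_insert_self _ _)
  refine ⟨insert v I, insert_subset hv (hIV.trans sdiff_subset), ?_, ?_⟩
  · push_cast
    refine hI.insert fun w hw _ => ?_
    have hwN : w ∉ N := (mem_sdiff.1 (hIV hw)).2
    have hvw : ¬ G.Adj v w :=
      fun h => hwN (mem_insert_of_mem (mem_filter.2 ⟨(mem_sdiff.1 (hIV hw)).1, h⟩))
    exact ⟨hvw, fun h => hvw h.symm⟩
  · have hN : ∑ u ∈ N, (1 : ℝ) / (#{w ∈ V | G.Adj u w} + 1) ≤ 1 := by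
      have hcard : (#N : ℝ) = #{w ∈ V | G.Adj v w} + 1 := by
        rw [card_insert_of_notMem (by simp)]; push_cast; rfl
      calc ∑ u ∈ N, (1 : ℝ) / (#{w ∈ V | G.Adj u w} + 1)
          ≤ ∑ u ∈ N, (1 : ℝ) / (#{w ∈ V | G.Adj v w} + 1) := by
            refine sum_le_sum fun u hu => one_div_le_one_div_of_le (by positivity) ?_
            exact_mod_cast Nat.add_le_add_right (hmin u (hNV hu)) 1
        _ = 1 := by rw [sum_const, nsmul_eq_mul, hcard]; field_simp
    have hrest : ∑ u ∈ V \ N, (1 : ℝ) / (#{w ∈ V | G.Adj u w} + 1) ≤ #I := by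
      refine le_trans (sum_le_sum fun u _ => ?_) hsum
      gcongr
      exact sdiff_subset
    rw [← sum_sdiff hNV, card_insert_of_notMem hvI]
    push_cast
    linarith

end SimpleGraph

section ProductCode

variable {ι β : Type*} (κ : Type*) [Fintype κ] [DecidableEq κ]

def productCode (C : Finset (ι → β)) :
    Finset (κ × ι → β) :=
  (Fintype.piFinset fun _ : κ => C).map (Equiv.curry κ ι β).symm.toEmbedding

variable {κ}

theorem sum_productCode {M : Type*} [AddCommMonoid M] (C : Finset (ι → β))
    (f : (κ × ι → β) → M) :
    ∑ v ∈ productCode κ C, f v = ∑ g ∈ Fintype.piFinset fun _ : κ => C, f (Function.uncurry g) :=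
  sum_map _ _ _

end ProductCode

section Hamming

variable {ι β κ : Type*} [Fintype ι] [DecidableEq β] [Fintype κ]

def hammingDistLtGraph (d : ℕ) : SimpleGraph (ι → β) :=
  SimpleGraph.fromRel fun u v => hammingDist u v < d

instance (d : ℕ) : DecidableRel (hammingDistLtGraph (ι := ι) (β := β) d).Adj :=
  fun u v => inferInstanceAs (Decidable (u ≠ v ∧ (hammingDist u v < d ∨ hammingDist v u < d)))

theorem isIndepSet_hammingDistLtGraph_iff {d : ℕ} {I : Set (ι → β)} :
    (hammingDistLtGraph d).IsIndepSet I ↔ ∀ u ∈ I, ∀ v ∈ I, u ≠ v → d ≤ hammingDist u v := by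
  simp [SimpleGraph.isIndepSet_iff, Set.Pairwise, hammingDistLtGraph, hammingDist_comm]

theorem pow_mul_degree_add_one_le_sum_pow_hammingDist {x : ℝ} (hx0 : 0 ≤ x)
    (hx1 : x ≤ 1) (d : ℕ) {V : Finset (ι → β)} {u : ι → β} (hu : u ∈ V) :
    x ^ (d - 1) * (#{v ∈ V | (hammingDistLtGraph d).Adj u v} + 1) ≤
      ∑ v ∈ V, x ^ hammingDist u v := by
  set N := insert u {v ∈ V | (hammingDistLtGraph d).Adj u v}
  have hcard : (#N : ℝ) = #{v ∈ V | (hammingDistLtGraph d).Adj u v} + 1 := by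
    rw [card_insert_of_notMem (by simp)]; push_cast; rfl
  calc x ^ (d - 1) * (#{v ∈ V | (hammingDistLtGraph d).Adj u v} + 1)
      = ∑ _v ∈ N, x ^ (d - 1) := by rw [sum_const, nsmul_eq_mul, hcard, mul_comm]
    _ ≤ ∑ v ∈ N, x ^ hammingDist u v := by
      refine sum_le_sum fun v hv => pow_le_pow_of_le_one hx0 hx1 ?_
      rcases mem_insert.1 hv with rfl | hv
      · simp
      · have := (mem_filter.1 hv).2
        simp only [hammingDistLtGraph, SimpleGraph.fromRel_adj, hammingDist_comm v u,
          or_self] at this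
        omega
    _ ≤ ∑ v ∈ V, x ^ hammingDist u v :=
      sum_le_sum_of_subset_of_nonneg (insert_subset hu (filter_subset _ _))
        fun _ _ _ => pow_nonneg hx0 _

theorem exists_code_pow_mul_sum_inv_le_card {x : ℝ} (hx0 : 0 < x) (hx1 : x ≤ 1) (d : ℕ)
    (V : Finset (ι → β)) :
    ∃ I ⊆ V, (∀ u ∈ I, ∀ v ∈ I, u ≠ v → d ≤ hammingDist u v) ∧
      x ^ (d - 1) * ∑ u ∈ V, 1 / ∑ v ∈ V, x ^ hammingDist u v ≤ #I := by
  obtain ⟨I, hIV, hI, hcard⟩ := (hammingDistLtGraph d).exists_isIndepSet_sum_inv_degree_le_card V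
  refine ⟨I, hIV, isIndepSet_hammingDistLtGraph_iff.1 hI, le_trans ?_ hcard⟩
  rw [mul_sum]
  refine sum_le_sum fun u hu => ?_
  have hW : 0 < ∑ v ∈ V, x ^ hammingDist u v :=
    sum_pos (fun _ _ => pow_pos hx0 _) ⟨u, hu⟩
  rw [mul_one_div, div_le_div_iff₀ hW (by positivity), one_mul]
  exact pow_mul_degree_add_one_le_sum_pow_hammingDist hx0.le hx1 d hu

theorem hammingDist_uncurry (g h : κ → ι → β) :
    hammingDist (Function.uncurry g) (Function.uncurry h) = ∑ j, hammingDist (g j) (h j) := by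
  simp only [hammingDist, card_filter, Fintype.sum_prod_type, Function.uncurry_apply_pair]
  rfl

theorem hammingDist_comp_equiv {ι' : Type*} [Fintype ι'] (e : ι' ≃ ι) (u v : ι → β) :
    hammingDist (u ∘ e) (v ∘ e) = hammingDist u v := by
  simp only [hammingDist, card_filter, Function.comp_apply]
  exact e.sum_comp fun i => if u i ≠ v i then 1 else 0

variable [DecidableEq κ]

theorem sum_pow_hammingDist_productCode (C : Finset (ι → β)) (x : ℝ) (g : κ → ι → β) :
    ∑ v ∈ productCode κ C, x ^ hammingDist (Function.uncurry g) v =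
      ∏ j, ∑ c ∈ C, x ^ hammingDist (g j) c := by
  rw [prod_univ_sum, sum_productCode]
  simp only [hammingDist_uncurry, prod_pow_eq_pow_sum]

theorem sum_inv_sum_pow_hammingDist_productCode (C : Finset (ι → β)) (x : ℝ) :
    ∑ u ∈ productCode κ C, 1 / ∑ v ∈ productCode κ C, x ^ hammingDist u v =
      (∑ c ∈ C, 1 / ∑ c' ∈ C, x ^ hammingDist c c') ^ Fintype.card κ := by
  rw [← card_univ, ← prod_const, prod_univ_sum, sum_productCode]
  simp only [sum_pow_hammingDist_productCode, one_div, prod_inv_distrib]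

end Hamming

theorem card_le_Aq {q n d : ℕ} {C : Finset (Fin n → Fin q)} (hC : minDistGE q n d C) :
    #C ≤ Aq q n d :=
  le_csSup ⟨Fintype.card (Fin n → Fin q), by rintro _ ⟨C', _, rfl⟩; exact C'.card_le_univ⟩
    ⟨C, hC, rfl⟩

theorem Aq_le_pow (q n d : ℕ) : Aq q n d ≤ q ^ n := by
  refine csSup_le ⟨0, ∅, by simp [minDistGE], card_empty⟩ ?_
  rintro _ ⟨C, _, rfl⟩
  simpa using C.card_le_univ

theorem card_le_Aq_of_equiv {ι : Type*} [Fintype ι] {q n d : ℕ} (e : ι ≃ Fin n)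
    {I : Finset (ι → Fin q)} (hI : ∀ u ∈ I, ∀ v ∈ I, u ≠ v → d ≤ hammingDist u v) :
    #I ≤ Aq q n d := by
  let f : (ι → Fin q) ↪ (Fin n → Fin q) := (e.arrowCongr (Equiv.refl _)).toEmbedding
  have hf : ∀ u, f u = u ∘ e.symm := fun _ => rfl
  rw [← card_map f]
  refine card_le_Aq ?_
  simp only [minDistGE, mem_map, forall_exists_index, and_imp]
  rintro _ u hu rfl _ v hv rfl huv
  rw [hf, hf, hammingDist_comp_equiv]
  exact hI u hu v hv (by rintro rfl; exact huv rfl)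

theorem pow_mul_sum_inv_localDistEnum_pow_le_Aq {q m : ℕ} (C : Finset (Fin m → Fin q))
    {x : ℝ} (hx0 : 0 < x) (hx1 : x ≤ 1) (k d : ℕ) :
    x ^ (d - 1) * (∑ c ∈ C, 1 / localDistEnum q m C c x) ^ k ≤ Aq q (k * m) d := by
  obtain ⟨I, -, hI, hcard⟩ := exists_code_pow_mul_sum_inv_le_card hx0 hx1 d (productCode (Fin k) C)
  rw [sum_inv_sum_pow_hammingDist_productCode, Fintype.card_fin] at hcard
  exact hcard.trans (by exact_mod_cast card_le_Aq_of_equiv finProdFinEquiv hI)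

theorem logb_Aq_div_le_one {q : ℕ} (hq : 1 < q) (n d : ℕ) :
    Real.logb q (Aq q n d) / n ≤ 1 := by
  rcases (Aq q n d).eq_zero_or_pos with h | h
  · simp [h]
  rcases n.eq_zero_or_pos with rfl | hn
  · simp
  have hq' : (1 : ℝ) < q := by exact_mod_cast hq
  rw [div_le_one (by positivity)]
  calc Real.logb q (Aq q n d) ≤ Real.logb q ((q : ℝ) ^ n) :=
        Real.logb_le_logb_of_le hq' (by positivity) (by exact_mod_cast Aq_le_pow q n d)
    _ = n := by rw [Real.logb_pow, Real.logb_self_eq_one hq', mul_one]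

theorem le_logb_Aq_div_of_product {q m : ℕ} (hq : 1 < q) (C : Finset (Fin m → Fin q))
    (hC : C.Nonempty) {δ : ℝ} (hδ : 0 ≤ δ) {x : ℝ} (hx0 : 0 < x) (hx1 : x ≤ 1) {k : ℕ}
    (hkm : 0 < k * m) :
    (1 / (m : ℝ)) * Real.logb q (∑ c ∈ C, 1 / localDistEnum q m C c x) + δ * Real.logb q x ≤
      Real.logb q (Aq q (k * m) ⌈δ * ((k * m : ℕ) : ℝ)⌉₊) / (k * m : ℕ) := by
  set n := k * m
  set d := ⌈δ * (n : ℝ)⌉₊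
  set S := ∑ c ∈ C, 1 / localDistEnum q m C c x
  have hq' : (1 : ℝ) < q := by exact_mod_cast hq
  have hS : 0 < S := sum_pos (fun c _ => one_div_pos.2 (sum_pos (fun _ _ => by positivity) hC)) hC
  have hn : (0 : ℝ) < n := by exact_mod_cast hkm
  have hd : ((d - 1 : ℕ) : ℝ) ≤ δ * n := by
    have := Nat.ceil_lt_add_one (by positivity : 0 ≤ δ * n)
    rcases d.eq_zero_or_pos with h | h
    · simp only [h, zero_tsub, Nat.cast_zero]; positivity
    · rw [Nat.cast_sub h]; push_cast; linarith
  have hlogx : Real.logb q x ≤ 0 := Real.logb_nonpos hq' hx0.le hx1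
  rw [le_div_iff₀ hn]
  calc ((1 / (m : ℝ)) * Real.logb q S + δ * Real.logb q x) * n
      = k * Real.logb q S + δ * n * Real.logb q x := by
        have hm : (m : ℝ) ≠ 0 := by exact_mod_cast (Nat.pos_of_mul_pos_left hkm).ne'
        simp only [n, Nat.cast_mul]; field_simp
    _ ≤ (d - 1 : ℕ) * Real.logb q x + k * Real.logb q S := by nlinarith
    _ = Real.logb q (x ^ (d - 1) * S ^ k) := by
        rw [Real.logb_mul (by positivity) (by positivity), Real.logb_pow, Real.logb_pow]
    _ ≤ Real.logb q (Aq q n d) := Real.logb_le_logb_of_le hq' (by positivity)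
        (pow_mul_sum_inv_localDistEnum_pow_le_Aq C hx0 hx1 k d)

theorem generalized_GV_asymptotic_caro_wei_general (q m : ℕ) (hq : 2 ≤ q) (hm : 1 ≤ m)
    (C : Finset (Fin m → Fin q)) (hC : C.Nonempty)
    (δ : ℝ) (hδ0 : 0 ≤ δ) (x : ℝ) (hx0 : 0 < x) (hx1 : x < 1) :
    (1 / (m : ℝ)) * Real.logb q (∑ c ∈ C, 1 / localDistEnum q m C c x)
        + δ * Real.logb q x
      ≤ alphaQ q δ := by
  have hbdd : Filter.IsBoundedUnder (· ≤ ·) Filter.atTop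
      (fun n : ℕ => Real.logb q (Aq q n ⌈δ * (n : ℝ)⌉₊) / n) :=
    Filter.isBoundedUnder_of ⟨1, fun n => logb_Aq_div_le_one hq n _⟩
  have hmult : Filter.Tendsto (fun k : ℕ => (k + 1) * m) Filter.atTop Filter.atTop :=
    Filter.tendsto_id.atTop_mul_const' hm |>.comp (Filter.tendsto_add_atTop_nat 1)
  refine Filter.le_limsup_of_frequently_le (hmult.frequently (Filter.Frequently.of_forall
    fun k => le_logb_Aq_div_of_product hq C hC hδ0 hx0 hx1.le (by positivity))) hbdd

theorem generalized_GV_asymptotic_caro_wei (q m : ℕ) (hq : 2 ≤ q) (hm : 1 ≤ m)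
    (C : Finset (Fin m → Fin q)) (hC : C.Nonempty)
    (δ : ℝ) (hδ0 : 0 ≤ δ) (hδ1 : δ ≤ 1) (x : ℝ) (hx0 : 0 < x) (hx1 : x < 1) :
    (1 / (m : ℝ)) * Real.logb q (∑ c ∈ C, 1 / localDistEnum q m C c x)
        + δ * Real.logb q x
      ≤ alphaQ q δ :=
  generalized_GV_asymptotic_caro_wei_general q m hq hm C hC δ hδ0 x hx0 hx1
end
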